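/- arXiv:1311.7245 — 3 statements merged into one kernel-verified Lean document; each statement's English description precedes it below -/
import Mathlib

section
/- Let G be a finite directed graph on vertex set {1,...,N} with nonnegative real vertex weights r_i. For a permutation π of {1,...,N}, define r̃_{π_i} = r_{π_i} if π_i is not an out-neighbor of any π_j with j ≤ i, and r̃_{π_i} = 0 otherwise. Then max over permutations π of ∑_{i=1}^N r̃_{π_i} equals the maximum, over all vertex subsets S whose induced subgraph is acyclic, of ∑_{i∈S} r_i (the Maximum Weighted Acyclic Induced Subgraph). -/
/-- `S` contains a directed cycle of the relation `E` (all vertices in `S`). -/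
def HasCycleOn {V : Type*} (E : V → V → Prop) (S : Finset V) : Prop :=
  ∃ (v : V) (l : List V), v ∈ S ∧ (∀ u ∈ l, u ∈ S) ∧ List.Chain E v l ∧
    E ((v :: l).getLast (List.cons_ne_nil v l)) v

/-!
A permutation keeps exactly the vertices all of whose in-neighbours come strictly later, and its
weight is the weight of that kept set. Along an edge into a kept vertex the position strictly
decreases, so the kept set is acyclic. Conversely, if `S` is acyclic then so is the relation
"`w ∈ S` and `u → w`, hence `w` must come before `u`"; by Szpilrajn's theorem it extends to a
linear order, and listing the vertices in that order keeps every vertex of `S`.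
-/

open Finset Relation

theorem hasCycleOn_iff_exists_transGen {V : Type*} (E : V → V → Prop) (S : Finset V) :
    HasCycleOn E S ↔ ∃ v, TransGen (fun u w => E u w ∧ w ∈ S) v v := by
  constructor
  · rintro ⟨v, l, hv, hl, hchain, hlast⟩
    have hchainS : (v :: l).IsChain fun u w => E u w ∧ w ∈ S :=
      hchain.imp_of_mem_tail_imp fun _ w _ hw huw => ⟨huw, hl w hw⟩
    exact ⟨v, TransGen.tail' (List.relationReflTransGen_of_exists_isChain_cons l hchainS rfl)
      ⟨hlast, hv⟩⟩
  · rintro ⟨v, hv⟩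
    obtain ⟨c, hvc, hcv, hvS⟩ := TransGen.tail'_iff.mp hv
    obtain ⟨l, hchain, hlast⟩ := List.exists_isChain_cons_of_relationReflTransGen hvc
    have hmem : ∀ u ∈ v :: l, u ∈ S :=
      hchain.induction _ _ (fun _ _ h _ => h.2) fun _ => hvS
    exact ⟨v, l, hvS, fun u hu => hmem u (List.mem_cons_of_mem v hu),
      hchain.imp fun _ _ h => h.1, hlast ▸ hcv⟩

theorem not_transGen_self_of_rel_imp_lt {α β : Type*} [Preorder β] {R : α → α → Prop}
    (f : α → β) (hf : ∀ a b, R a b → f a < f b) (a : α) : ¬TransGen R a a := fun h =>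
  lt_irrefl (f a) <| by simpa only [transGen_eq_self] using h.lift f hf

theorem exists_equiv_rel_imp_lt_of_not_transGen_self {α β : Type*} [Fintype α] [Fintype β]
    [LinearOrder β] (hcard : Fintype.card α = Fintype.card β) {R : α → α → Prop}
    (hR : ∀ a, ¬TransGen R a a) : ∃ f : α ≃ β, ∀ a b, R a b → f a < f b := by
  have : IsPartialOrder α (ReflTransGen R) :=
    { refl := fun _ => .refl
      trans := fun _ _ _ => .trans
      antisymm := fun a b hab hba => by
        rcases reflTransGen_iff_eq_or_transGen.mp hab with rfl | hab
        · rfl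
        rcases reflTransGen_iff_eq_or_transGen.mp hba with rfl | hba
        · rfl
        exact (hR a (hab.trans hba)).elim }
  obtain ⟨s, hs, hRs⟩ := extend_partialOrder (ReflTransGen R)
  let _ : LinearOrder α :=
    { le := s
      le_refl := hs.refl
      le_trans := fun _ _ _ => hs.trans _ _ _
      le_antisymm := fun _ _ => hs.antisymm _ _
      le_total := hs.total
      toDecidableLE := Classical.decRel _ }
  let e : α ≃o β :=
    (Fintype.orderIsoFinOfCardEq α rfl).symm.trans (Fintype.orderIsoFinOfCardEq β hcard.symm)
  refine ⟨e.toEquiv, fun a b hab => ?_⟩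
  have hlt : a < b := lt_of_le_of_ne (hRs _ _ (.single hab)) <| by
    rintro rfl
    exact hR a (.single hab)
  exact e.strictMono hlt

section Kept

variable {α : Type*} [Fintype α] [LinearOrder α] (E : α → α → Prop) [DecidableRel E]

def permWeight (r : α → ℝ) (π : Equiv.Perm α) : ℝ :=
  ∑ i, if ∀ j, j ≤ i → ¬E (π j) (π i) then r (π i) else 0

def keptVertices (π : Equiv.Perm α) : Finset α :=
  (univ.filter fun i => ∀ j, j ≤ i → ¬E (π j) (π i)).map π.toEmbedding

theorem permWeight_eq_sum_keptVertices (r : α → ℝ) (π : Equiv.Perm α) :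
    permWeight E r π = ∑ v ∈ keptVertices E π, r v := by
  rw [keptVertices, sum_map, sum_filter]
  rfl

theorem mem_keptVertices {π : Equiv.Perm α} {v : α} :
    v ∈ keptVertices E π ↔ ∀ u, E u v → π.symm v < π.symm u := by
  simp only [keptVertices, mem_map_equiv, mem_filter, mem_univ, true_and, Equiv.apply_symm_apply]
  refine ⟨fun h u huv => lt_of_not_ge fun hle => h _ hle (by simpa using huv),
    fun h j hj hjv => (h _ hjv).not_ge (by simpa using hj)⟩

theorem not_hasCycleOn_keptVertices (π : Equiv.Perm α) : ¬HasCycleOn E (keptVertices E π) := by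
  rw [hasCycleOn_iff_exists_transGen]
  rintro ⟨v, hv⟩
  exact not_transGen_self_of_rel_imp_lt (R := Function.swap _) π.symm
    (fun _ _ h => (mem_keptVertices E).mp h.2 _ h.1) v (transGen_swap.mpr hv)

theorem exists_subset_keptVertices {S : Finset α} (hS : ¬HasCycleOn E S) :
    ∃ π : Equiv.Perm α, S ⊆ keptVertices E π := by
  rw [hasCycleOn_iff_exists_transGen, not_exists] at hS
  obtain ⟨f, hf⟩ := exists_equiv_rel_imp_lt_of_not_transGen_self (R := Function.swap _) rfl
    fun v h => hS v (transGen_swap.mp h)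
  exact ⟨f.symm, fun v hv => (mem_keptVertices E).mpr fun u huv => by
    simpa using hf v u ⟨huv, hv⟩⟩

theorem isGreatest_sup'_permWeight (r : α → ℝ) (hr : ∀ i, 0 ≤ r i) :
    IsGreatest {x : ℝ | ∃ S : Finset α, ¬HasCycleOn E S ∧ x = ∑ i ∈ S, r i}
      (univ.sup' univ_nonempty (permWeight E r)) := by
  constructor
  · obtain ⟨π, -, hπ⟩ := exists_mem_eq_sup' univ_nonempty (permWeight E r)
    exact ⟨keptVertices E π, not_hasCycleOn_keptVertices E π,
      hπ.trans (permWeight_eq_sum_keptVertices E r π)⟩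
  · rintro x ⟨S, hS, rfl⟩
    obtain ⟨π, hSπ⟩ := exists_subset_keptVertices E hS
    calc ∑ i ∈ S, r i ≤ ∑ v ∈ keptVertices E π, r v :=
          sum_le_sum_of_subset_of_nonneg hSπ fun i _ _ => hr i
      _ = permWeight E r π := (permWeight_eq_sum_keptVertices E r π).symm
      _ ≤ univ.sup' univ_nonempty (permWeight E r) := le_sup' _ (mem_univ π)

end Kept

theorem stmt_1_general (N : ℕ) (E : Fin N → Fin N → Prop) [DecidableRel E]
    (r : Fin N → ℝ) (hr : ∀ i, 0 ≤ r i) :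
    IsGreatest {x : ℝ | ∃ S : Finset (Fin N), ¬ HasCycleOn E S ∧ x = ∑ i ∈ S, r i}
      (Finset.univ.sup' Finset.univ_nonempty
        (fun π : Equiv.Perm (Fin N) =>
          ∑ i : Fin N, if ∀ j, j ≤ i → ¬ E (π j) (π i) then r (π i) else 0)) := by
  convert isGreatest_sup'_permWeight E r hr using 2
  -- the two sides decide `∀ j ≤ i, _` through different (propositionally equal) instances
  unfold permWeight
  congr!

theorem stmt_1 (N : ℕ) (hN : 1 ≤ N) (E : Fin N → Fin N → Prop) [DecidableRel E]
    (r : Fin N → ℝ) (hr : ∀ i, 0 ≤ r i) :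
    IsGreatest {x : ℝ | ∃ S : Finset (Fin N), ¬ HasCycleOn E S ∧ x = ∑ i ∈ S, r i}
      (Finset.univ.sup' Finset.univ_nonempty
        (fun π : Equiv.Perm (Fin N) =>
          ∑ i : Fin N, if ∀ j, j ≤ i → ¬ E (π j) (π i) then r (π i) else 0)) :=
  stmt_1_general N E r hr
end

section
/- Let T : ℕ^N → ℝ≥0 be subadditive (T(l+m) ≤ T(l) + T(m) for all l,m ∈ ℕ^N) with T(0) = 0 and T finite. Then for any r ∈ (ℝ≥0)^N, the limit T̂(r) = lim_{n→∞} T(⌈n·r⌉)/n exists, is finite, and T̂ is positively homogeneous: T̂(ρr) = ρ·T̂(r) for all ρ ≥ 0. -/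
/-!
Subadditivity bounds `T b ≤ T a + C(M)` whenever `a ≤ b ≤ a + M` (write `b = a + c` with `c` in
the finite box below `M`), so `T` is monotone up to bounded errors. As `⌊(m + n) r⌋` exceeds
`⌊m r⌋ + ⌊n r⌋` by at most one in each coordinate, `n ↦ T ⌊n r⌋ + C` is subadditive and Fekete's
lemma gives the limit of `T ⌊n r⌋ / n`. For real `t`, the vector `⌈t r⌉` lies between `⌊⌊t⌋ r⌋`
and `⌊(⌈t⌉ + m) r⌋`, within bounded boxes of both, where `m r_i ≥ 1` on the nonzero coordinates;
hence `T ⌈t r⌉ / t` has the same limit as `t → ∞` through the reals, and homogeneity follows by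
substituting `ρ t` for `t`.
-/

open Filter Topology

namespace Nat

lemma floor_add_floor_le_floor_add {a b : ℝ} (ha : 0 ≤ a) (hb : 0 ≤ b) :
    ⌊a⌋₊ + ⌊b⌋₊ ≤ ⌊a + b⌋₊ := by
  apply Nat.le_floor
  push_cast
  linarith [Nat.floor_le ha, Nat.floor_le hb]

lemma floor_add_le_floor_add_ceil (a b : ℝ) : ⌊a + b⌋₊ ≤ ⌊a⌋₊ + ⌈b⌉₊ := by
  have : ⌊a + b⌋₊ < ⌊a⌋₊ + ⌈b⌉₊ + 1 := by
    rw [Nat.floor_lt' (by omega)]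
    push_cast
    linarith [Nat.lt_floor_add_one a, Nat.le_ceil b]
  omega

lemma ceil_le_floor_add {a b : ℝ} (ha : 0 ≤ a) (hb : 1 ≤ b) : ⌈a⌉₊ ≤ ⌊a + b⌋₊ :=
  calc ⌈a⌉₊ ≤ ⌊a⌋₊ + 1 := Nat.ceil_le_floor_add_one a
    _ = ⌊a + 1⌋₊ := (Nat.floor_add_one ha).symm
    _ ≤ ⌊a + b⌋₊ := Nat.floor_le_floor (by linarith)

end Nat

namespace SubadditiveLimit

variable {ι : Type*}

noncomputable def scaledFloor (r : ι → ℝ) (t : ℝ) : ι → ℕ := fun i => ⌊t * r i⌋₊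

noncomputable def scaledCeil (r : ι → ℝ) (t : ℝ) : ι → ℕ := fun i => ⌈t * r i⌉₊

lemma scaledCeil_smul (ρ : ℝ) (r : ι → ℝ) (t : ℝ) : scaledCeil (ρ • r) t = scaledCeil r (ρ * t) :=
  funext fun i => by simp only [scaledCeil, Pi.smul_apply, smul_eq_mul, mul_left_comm, mul_assoc]

@[simp]
lemma scaledCeil_zero (r : ι → ℝ) : scaledCeil r 0 = 0 :=
  funext fun i => by simp [scaledCeil]

section Rounding

variable {r : ι → ℝ} {s t d : ℝ}

lemma scaledFloor_add_le (hr : 0 ≤ r) (hs : 0 ≤ s) (ht : 0 ≤ t) :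
    scaledFloor r s + scaledFloor r t ≤ scaledFloor r (s + t) := fun i => by
  simpa [scaledFloor, add_mul] using
    Nat.floor_add_floor_le_floor_add (mul_nonneg hs (hr i)) (mul_nonneg ht (hr i))

lemma scaledFloor_add_le_add_add_one (s t : ℝ) :
    scaledFloor r (s + t) ≤ scaledFloor r s + scaledFloor r t + 1 := fun i => by
  have := Nat.floor_add_le_floor_add_ceil (s * r i) (t * r i)
  have := Nat.ceil_le_floor_add_one (t * r i)
  simp only [scaledFloor, add_mul, Pi.add_apply, Pi.one_apply]
  omega

lemma scaledFloor_le_scaledCeil (hr : 0 ≤ r) (h : s ≤ t) : scaledFloor r s ≤ scaledCeil r t :=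
  fun i => (Nat.floor_le_floor (mul_le_mul_of_nonneg_right h (hr i))).trans (Nat.floor_le_ceil _)

lemma scaledFloor_le_scaledCeil_add (hr : 0 ≤ r) (h : s ≤ t + d) :
    scaledFloor r s ≤ scaledCeil r t + scaledCeil r d := fun i => by
  have := Nat.floor_le_floor (mul_le_mul_of_nonneg_right h (hr i))
  have := Nat.floor_add_le_floor_add_ceil (t * r i) (d * r i)
  have := Nat.floor_le_ceil (t * r i)
  simp only [scaledFloor, scaledCeil, add_mul, Pi.add_apply] at *
  omega

lemma scaledCeil_le_scaledFloor_add (hr : 0 ≤ r) (h : t ≤ s + d) :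
    scaledCeil r t ≤ scaledFloor r s + (scaledCeil r d + 1) := fun i => by
  have := Nat.ceil_le_floor_add_one (t * r i)
  have := Nat.floor_le_floor (mul_le_mul_of_nonneg_right h (hr i))
  have := Nat.floor_add_le_floor_add_ceil (s * r i) (d * r i)
  simp only [scaledFloor, scaledCeil, add_mul, Pi.add_apply, Pi.one_apply] at *
  omega

lemma scaledCeil_le_scaledFloor (hr : 0 ≤ r) (ht : 0 ≤ t) (hd : ∀ i, r i = 0 ∨ 1 ≤ d * r i)
    (h : t + d ≤ s) : scaledCeil r t ≤ scaledFloor r s := fun i => by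
  rcases hd i with h0 | h1
  · simp [scaledCeil, h0]
  · calc ⌈t * r i⌉₊ ≤ ⌊t * r i + d * r i⌋₊ := Nat.ceil_le_floor_add (mul_nonneg ht (hr i)) h1
      _ ≤ ⌊s * r i⌋₊ := by
        rw [← add_mul]; exact Nat.floor_le_floor (mul_le_mul_of_nonneg_right h (hr i))

lemma exists_nat_forall_eq_zero_or_one_le_mul [Finite ι] (hr : 0 ≤ r) :
    ∃ m : ℕ, ∀ i, r i = 0 ∨ 1 ≤ m * r i := by
  refine (eventually_all.2 fun i => ?_).exists (f := atTop)
  rcases (hr i).eq_or_lt with h0 | hpos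
  · exact .of_forall fun _ => .inl h0.symm
  · filter_upwards [tendsto_natCast_atTop_atTop.eventually_ge_atTop (r i)⁻¹] with m hm
    exact .inr ((inv_mul_cancel₀ hpos.ne').ge.trans (mul_le_mul_of_nonneg_right hm hpos.le))

end Rounding

lemma tendsto_add_comp_div {u : ℕ → ℝ} {L : ℝ}
    (hu : Tendsto (fun n : ℕ => u n / n) atTop (𝓝 L)) {g : ℝ → ℕ} (hg : Tendsto g atTop atTop)
    (hg₁ : Tendsto (fun t => (g t : ℝ) / t) atTop (𝓝 1)) (C : ℝ) :
    Tendsto (fun t => (u (g t) + C) / t) atTop (𝓝 L) := by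
  have hmain : Tendsto (fun t => u (g t) / t) atTop (𝓝 L) := by
    rw [← mul_one L]
    refine ((hu.comp hg).mul hg₁).congr' ?_
    filter_upwards [hg.eventually_gt_atTop 0] with t ht
    exact div_mul_div_cancel₀ (Nat.cast_pos.2 ht).ne'
  simpa [add_div] using hmain.add (tendsto_const_nhds.div_atTop tendsto_id)

section Subadditive

variable {T : (ι → ℕ) → ℝ} {r : ι → ℝ}

lemma exists_le_add_of_le_of_le_add [Finite ι] (hsub : ∀ l m, T (l + m) ≤ T l + T m)
    (M : ι → ℕ) : ∃ C, ∀ a b, a ≤ b → b ≤ a + M → T b ≤ T a + C := by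
  have := Fintype.ofFinite ι
  classical
  obtain ⟨C, hC⟩ := ((Set.finite_Iic M).image T).bddAbove
  refine ⟨C, fun a b hab hbM => ?_⟩
  obtain ⟨c, rfl⟩ := exists_add_of_le hab
  exact (hsub a c).trans (add_le_add_right (hC ⟨c, le_of_add_le_add_left hbM, rfl⟩) _)

lemma exists_tendsto_div_scaledFloor [Finite ι] (hT : ∀ k, 0 ≤ T k)
    (hsub : ∀ l m, T (l + m) ≤ T l + T m) (hr : 0 ≤ r) :
    ∃ L, Tendsto (fun n : ℕ => T (scaledFloor r n) / n) atTop (𝓝 L) := by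
  obtain ⟨C, hC⟩ := exists_le_add_of_le_of_le_add hsub 1
  have hC₀ : 0 ≤ C := by simpa using hC 0 0 le_rfl (by simp)
  have hsubadd : Subadditive fun n => T (scaledFloor r n) + C := fun m n => by
    have := hC _ _ (scaledFloor_add_le hr m.cast_nonneg n.cast_nonneg)
      (scaledFloor_add_le_add_add_one _ _)
    push_cast
    linarith [hsub (scaledFloor r m) (scaledFloor r n)]
  have hbdd : BddBelow (Set.range fun n : ℕ => (T (scaledFloor r n) + C) / n) :=
    ⟨0, by rintro _ ⟨n, rfl⟩; exact div_nonneg (add_nonneg (hT _) hC₀) n.cast_nonneg⟩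
  refine ⟨hsubadd.lim, ?_⟩
  simpa [add_div] using (hsubadd.tendsto_lim hbdd).sub (tendsto_const_div_atTop_nhds_zero_nat C)

lemma exists_tendsto_div_scaledCeil [Finite ι] (hT : ∀ k, 0 ≤ T k)
    (hsub : ∀ l m, T (l + m) ≤ T l + T m) (hr : 0 ≤ r) :
    ∃ L, Tendsto (fun t : ℝ => T (scaledCeil r t) / t) atTop (𝓝 L) := by
  obtain ⟨L, hL⟩ := exists_tendsto_div_scaledFloor hT hsub hr
  obtain ⟨m, hm⟩ := exists_nat_forall_eq_zero_or_one_le_mul hr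
  obtain ⟨C₁, hC₁⟩ := exists_le_add_of_le_of_le_add hsub (scaledCeil r 1 + 1)
  obtain ⟨C₂, hC₂⟩ := exists_le_add_of_le_of_le_add hsub (scaledCeil r (m + 1))
  have hupper : ∀ t, 0 ≤ t → T (scaledCeil r t) ≤ T (scaledFloor r ⌊t⌋₊) + C₁ := fun t ht =>
    hC₁ _ _ (scaledFloor_le_scaledCeil hr (Nat.floor_le ht))
      (scaledCeil_le_scaledFloor_add hr (Nat.lt_floor_add_one t).le)
  have hlower : ∀ t, 0 ≤ t →
      T (scaledFloor r (⌈t⌉₊ + m : ℕ)) ≤ T (scaledCeil r t) + C₂ := fun t ht => by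
    refine hC₂ _ _ (scaledCeil_le_scaledFloor hr ht hm ?_) (scaledFloor_le_scaledCeil_add hr ?_)
    · push_cast; linarith [Nat.le_ceil t]
    · push_cast; linarith [Nat.ceil_lt_add_one ht]
  have hratio : Tendsto (fun t : ℝ => ((⌈t⌉₊ + m : ℕ) : ℝ) / t) atTop (𝓝 1) := by
    simpa [add_div] using tendsto_nat_ceil_div_atTop.add
      ((tendsto_const_nhds (x := (m : ℝ))).div_atTop tendsto_id)
  have hshift : Tendsto (fun t : ℝ => ⌈t⌉₊ + m) atTop atTop :=
    tendsto_atTop_mono (fun _ => Nat.le_add_right _ _) tendsto_nat_ceil_atTop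
  refine ⟨L, tendsto_of_tendsto_of_tendsto_of_le_of_le'
    (tendsto_add_comp_div hL hshift hratio (-C₂))
    (tendsto_add_comp_div hL tendsto_nat_floor_atTop tendsto_nat_floor_div_atTop C₁) ?_ ?_⟩
  · filter_upwards [eventually_gt_atTop 0] with t ht
    exact div_le_div_of_nonneg_right (by linarith [hlower t ht.le]) ht.le
  · filter_upwards [eventually_gt_atTop 0] with t ht
    exact div_le_div_of_nonneg_right (hupper t ht.le) ht.le

lemma tendsto_div_scaledCeil_smul {L : ℝ}
    (hL : Tendsto (fun t : ℝ => T (scaledCeil r t) / t) atTop (𝓝 L)) {ρ : ℝ} (hρ : 0 ≤ ρ) :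
    Tendsto (fun t : ℝ => T (scaledCeil (ρ • r) t) / t) atTop (𝓝 (ρ * L)) := by
  simp only [scaledCeil_smul]
  rcases hρ.eq_or_lt with rfl | hρ
  · simpa using (tendsto_const_nhds (x := T 0)).div_atTop tendsto_id
  refine ((hL.comp (tendsto_id.const_mul_atTop hρ)).const_mul ρ).congr fun t => ?_
  rw [Function.comp_apply, id, ← mul_div_assoc, mul_div_mul_left _ _ hρ.ne']

end Subadditive

end SubadditiveLimit

open SubadditiveLimit

theorem stmt_6_general (N : ℕ) (T : (Fin N → ℕ) → ℝ)
    (hTnonneg : ∀ k, 0 ≤ T k)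
    (hsub : ∀ l m : Fin N → ℕ, T (l + m) ≤ T l + T m) :
    ∃ That : (Fin N → ℝ) → ℝ,
      (∀ r : Fin N → ℝ, (∀ i, 0 ≤ r i) →
        Filter.Tendsto (fun n : ℕ => T (fun i => ⌈(n : ℝ) * r i⌉₊) / n)
          Filter.atTop (nhds (That r))) ∧
      (∀ r : Fin N → ℝ, (∀ i, 0 ≤ r i) → 0 ≤ That r) ∧
      (∀ r : Fin N → ℝ, (∀ i, 0 ≤ r i) → ∀ ρ : ℝ, 0 ≤ ρ →
        That (ρ • r) = ρ * That r) := by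
  set That : (Fin N → ℝ) → ℝ := fun r => limUnder atTop fun t : ℝ => T (scaledCeil r t) / t
  have hThat (r : Fin N → ℝ) (hr : 0 ≤ r) :
      Tendsto (fun t : ℝ => T (scaledCeil r t) / t) atTop (𝓝 (That r)) :=
    tendsto_nhds_limUnder (exists_tendsto_div_scaledCeil hTnonneg hsub hr)
  have hThat_nat (r : Fin N → ℝ) (hr : 0 ≤ r) :=
    (hThat r hr).comp tendsto_natCast_atTop_atTop
  refine ⟨That, hThat_nat, fun r hr => ?_, fun r hr ρ hρ => ?_⟩
  · exact ge_of_tendsto' (hThat_nat r hr) fun n => div_nonneg (hTnonneg _) n.cast_nonneg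
  · exact tendsto_nhds_unique (hThat _ (smul_nonneg hρ hr))
      (tendsto_div_scaledCeil_smul (hThat r hr) hρ)

theorem stmt_6 (N : ℕ) (T : (Fin N → ℕ) → ℝ)
    (hT0 : T 0 = 0) (hTnonneg : ∀ k, 0 ≤ T k)
    (hsub : ∀ l m : Fin N → ℕ, T (l + m) ≤ T l + T m) :
    ∃ That : (Fin N → ℝ) → ℝ,
      (∀ r : Fin N → ℝ, (∀ i, 0 ≤ r i) →
        Filter.Tendsto (fun n : ℕ => T (fun i => ⌈(n : ℝ) * r i⌉₊) / n)
          Filter.atTop (nhds (That r))) ∧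
      (∀ r : Fin N → ℝ, (∀ i, 0 ≤ r i) → 0 ≤ That r) ∧
      (∀ r : Fin N → ℝ, (∀ i, 0 ≤ r i) → ∀ ρ : ℝ, 0 ≤ ρ →
        That (ρ • r) = ρ * That r) :=
  stmt_6_general N T hTnonneg hsub
end

section
/- Let π be any permutation of {1,...,N} and let G be a directed graph on {1,...,N}. Define S_π = { π_i : π_i is not an out-neighbor of any π_j with j ≤ i }. Then the subgraph of G induced by S_π is acyclic. -/
/-! On a directed cycle every vertex has an in-neighbour on the cycle. A vertex of
the cycle that comes last in the order `π` would then have an in-neighbour `π j` with `j` not later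
than itself, which is exactly what membership in `S_π` forbids. -/

theorem List.IsChain.exists_rel_of_mem_tail {V : Type*} {E : V → V → Prop} {v w : V}
    {l : List V} (h : List.IsChain E (v :: l)) (hw : w ∈ l) : ∃ u ∈ v :: l, E u w := by
  induction l generalizing v with
  | nil => simp at hw
  | cons a l ih =>
    rw [List.isChain_cons_cons] at h
    rcases List.mem_cons.mp hw with rfl | hw
    · exact ⟨v, List.mem_cons_self, h.1⟩
    · obtain ⟨u, hu, huw⟩ := ih h.2 hw
      exact ⟨u, List.mem_cons_of_mem v hu, huw⟩

theorem HasCycleOn.exists_rel {V : Type*} {E : V → V → Prop} {S : Finset V}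
    (hS : HasCycleOn E S) :
    ∃ c : List V, c ≠ [] ∧ (∀ w ∈ c, w ∈ S) ∧ ∀ w ∈ c, ∃ u ∈ c, E u w := by
  obtain ⟨v, l, hv, hl, hchain, hlast⟩ := hS
  refine ⟨v :: l, List.cons_ne_nil v l, ?_, fun w hw => ?_⟩
  · exact fun w hw => (List.mem_cons.mp hw).elim (· ▸ hv) (hl w)
  · rcases List.mem_cons.mp hw with rfl | hw
    · exact ⟨_, List.getLast_mem _, hlast⟩
    · exact List.IsChain.exists_rel_of_mem_tail hchain hw

theorem not_hasCycleOn_of_forall_le {V α : Type*} [LinearOrder α] {E : V → V → Prop}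
    {S : Finset V} (f : V → α) (hf : ∀ w ∈ S, ∀ u, f u ≤ f w → ¬ E u w) :
    ¬ HasCycleOn E S := by
  intro hS
  obtain ⟨c, hc, hcS, hpred⟩ := hS.exists_rel
  obtain ⟨w, hw, hmax⟩ := Multiset.exists_max_image f (s := (c : Multiset V)) (by simpa using hc)
  obtain ⟨u, hu, huw⟩ := hpred w hw
  exact hf w (hcS w hw) u (hmax u hu) huw

theorem stmt_18 (N : ℕ) (E : Fin N → Fin N → Prop) [DecidableRel E]
    (π : Equiv.Perm (Fin N)) :
    ¬ HasCycleOn E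
      ((Finset.univ.filter (fun i : Fin N => ∀ j, j ≤ i → ¬ E (π j) (π i))).image π) := by
  refine not_hasCycleOn_of_forall_le π.symm fun w hw u hle => ?_
  obtain ⟨i, hi, rfl⟩ := Finset.mem_image.mp hw
  simpa using (Finset.mem_filter.mp hi).2 (π.symm u) (by simpa using hle)
end
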